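/- For every strategy σ ∈ Σ^Opt, every state s₀ ∈ S', and every finite path ρ of M' starting at s₀ (all states in S', all steps in Opt), P'_{σ,s₀}(ρ) = Pr_{σ,s₀}(GoodCyl(ρ))/Val(s₀). -/

import Mathlib

open scoped ENNReal NNReal Classical
open Filter

universe u v

variable {S : Type u} {A : Type v}

/-- A finite MDP: `P s a = some d` means action `a` is legal at `s` and `d` is a
probability distribution on `S`; every state has at least one legal action. -/
structure MDP (S : Type u) (A : Type v) [Fintype S] [Fintype A] where
  P : S → A → Option (S → NNReal)
  sum_one : ∀ s a d, P s a = some d → (∑ s', d s') = 1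
  exists_legal : ∀ s, ∃ a, (P s a).isSome

/-- Last state of an alternating path starting at `s` with steps `steps`. -/
def lastState : S → List (A × S) → S
  | s, [] => s
  | _, (_, s') :: rest => lastState s' rest

/-- A finite path: a start state together with a list of (action, next-state) steps. -/
structure FPath (S : Type u) (A : Type v) where
  start : S
  steps : List (A × S)

namespace FPath

def last (ρ : FPath S A) : S := lastState ρ.start ρ.steps

def states (ρ : FPath S A) : List S := ρ.start :: ρ.steps.map Prod.snd

def length (ρ : FPath S A) : ℕ := ρ.steps.length

end FPath

/-- A (raw) strategy: maps each finite path (start state + steps) to a distribution on actions. -/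
def Strat (S : Type u) (A : Type v) := S → List (A × S) → A → ℝ≥0∞

/-- Shifted strategy `σ_ρ` for `ρ = (s₀, pre)`: `σ_ρ(ρ') = σ(ρ·ρ')`. -/
def shiftStrat (σ : Strat S A) (s₀ : S) (pre : List (A × S)) : Strat S A :=
  fun _ steps a => σ s₀ (pre ++ steps) a

/-- Generic cylinder weight (product of strategy- and transition-probabilities along the
steps), relative to a transition kernel `p`. The accumulator `pre` is the path-prefix so far. -/
noncomputable def wtP (p : S → A → S → ℝ≥0∞) (σ : Strat S A) (s₀ : S) :
    List (A × S) → List (A × S) → ℝ≥0∞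
  | _, [] => 1
  | pre, (a, s') :: rest =>
      σ s₀ pre a * p (lastState s₀ pre) a s' * wtP p σ s₀ (pre ++ [(a, s')]) rest
  termination_by pre l => l.length

/-- Generic cylinder probability of path `ρ` from start state `s`, kernel `p`. -/
noncomputable def cylProbP (p : S → A → S → ℝ≥0∞) (σ : Strat S A) (s : S) (ρ : FPath S A) :
    ℝ≥0∞ :=
  if ρ.start = s then wtP p σ ρ.start [] ρ.steps else 0

namespace MDP

variable [Fintype S] [Fintype A]

def legal (M : MDP S A) (s : S) (a : A) : Prop := (M.P s a).isSome

noncomputable def prob (M : MDP S A) (s : S) (a : A) (s' : S) : ℝ≥0∞ :=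
  (M.P s a).elim 0 fun d => (d s' : ℝ≥0∞)

/-- `ρ` is a finite path of `M` from `s`: every action legal, every transition of
positive probability. -/
def IsPathFrom (M : MDP S A) : S → List (A × S) → Prop
  | _, [] => True
  | s, (a, s') :: rest => M.legal s a ∧ 0 < M.prob s a s' ∧ M.IsPathFrom s' rest

def IsPath (M : MDP S A) (ρ : FPath S A) : Prop := M.IsPathFrom ρ.start ρ.steps

/-- `σ` is a strategy: at every finite path it gives a probability distribution on actions
supported on actions legal at the last state. -/
def IsStrategy (M : MDP S A) (σ : Strat S A) : Prop :=
  ∀ s steps, M.IsPathFrom s steps →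
    (∑ a, σ s steps a) = 1 ∧ ∀ a, 0 < σ s steps a → M.legal (lastState s steps) a

/-- Cylinder probability `P_{σ,s}(ρ)` in `M`. -/
noncomputable def cylProb (M : MDP S A) (σ : Strat S A) (s : S) (ρ : FPath S A) : ℝ≥0∞ :=
  cylProbP M.prob σ s ρ

/-- `T` is a set of sink states: each `t ∈ T` has exactly one legal action, leading back
to `t` with probability `1`. -/
def SinkSet (M : MDP S A) (T : Set S) : Prop :=
  ∀ t ∈ T, (∃! a, M.legal t a) ∧ ∀ a, M.legal t a → M.prob t a t = 1

/-- Generic pruned finite-path predicate: all states have positive value `v` and every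
step uses an `opt` state-action pair with positive transition probability in `M`. -/
def IsPathFromPruned (M : MDP S A) (v : S → ℝ≥0∞) (opt : S → A → Prop) :
    S → List (A × S) → Prop
  | s, [] => 0 < v s
  | s, (a, s') :: rest =>
      0 < v s ∧ opt s a ∧ 0 < M.prob s a s' ∧ M.IsPathFromPruned v opt s' rest

/-! ### Reachability -/

/-- `ρ` is a `T`-hitting path: its last state lies in `T` and no other state does. -/
def HitsFirst (T : Set S) (ρ : FPath S A) : Prop :=
  ρ.last ∈ T ∧ ∀ x ∈ ρ.states.dropLast, x ∉ T

/-- `Pr_{σ,s}(◊T)`: sum over `T`-hitting paths starting at `s` of their cylinder probabilities. -/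
noncomputable def prReach (M : MDP S A) (σ : Strat S A) (s : S) (T : Set S) : ℝ≥0∞ :=
  ∑' ρ : {ρ : FPath S A // M.IsPath ρ ∧ HitsFirst T ρ ∧ ρ.start = s}, M.cylProb σ s ρ.1

/-- `Val(s)` for reachability: supremum over strategies of `Pr_{σ,s}(◊T)`. -/
noncomputable def reachVal (M : MDP S A) (T : Set S) (s : S) : ℝ≥0∞ :=
  ⨆ (σ : Strat S A) (_ : M.IsStrategy σ), M.prReach σ s T

/-- `(s,a) ∈ Opt` for reachability. -/
def OptR (M : MDP S A) (T : Set S) (s : S) (a : A) : Prop :=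
  M.legal s a ∧ M.reachVal T s = ∑ s', M.prob s a s' * M.reachVal T s'

/-- `σ ∈ Σ^Opt` for reachability. -/
def SigmaOptR (M : MDP S A) (T : Set S) (σ : Strat S A) : Prop :=
  ∀ s steps, M.IsPathFrom s steps → ∀ a, 0 < σ s steps a → M.OptR T (lastState s steps) a

/-- Transition probabilities of the pruned MDP `M'` for reachability. -/
noncomputable def probR' (M : MDP S A) (T : Set S) (s : S) (a : A) (s' : S) : ℝ≥0∞ :=
  if M.OptR T s a ∧ 0 < M.reachVal T s then
    M.prob s a s' * M.reachVal T s' / M.reachVal T s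
  else 0

/-- `ρ` is a finite path of the pruned MDP `M'` (reachability version). -/
def IsPathR' (M : MDP S A) (T : Set S) (ρ : FPath S A) : Prop :=
  M.IsPathFromPruned (M.reachVal T) (M.OptR T) ρ.start ρ.steps

/-- Cylinder probability `P'_{σ,s}(ρ)` in the pruned MDP `M'` (reachability version). -/
noncomputable def cylProbR' (M : MDP S A) (T : Set S) (σ : Strat S A) (s : S) (ρ : FPath S A) :
    ℝ≥0∞ :=
  cylProbP (M.probR' T) σ s ρ

/-- `Pr'_{σ,s}(◊T)` in the pruned MDP `M'`. -/
noncomputable def prReach' (M : MDP S A) (σ : Strat S A) (s : S) (T : Set S) : ℝ≥0∞ :=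
  ∑' ρ : {ρ : FPath S A // M.IsPathR' T ρ ∧ HitsFirst T ρ ∧ ρ.start = s},
    M.cylProbR' T σ s ρ.1

/-- Probability of hitting `T` for the first time in exactly `r` steps, in `M`. -/
noncomputable def hitLenProb (M : MDP S A) (σ : Strat S A) (s : S) (T : Set S) (r : ℕ) :
    ℝ≥0∞ :=
  ∑' ρ : {ρ : FPath S A // M.IsPath ρ ∧ HitsFirst T ρ ∧ ρ.start = s ∧ ρ.length = r},
    M.cylProb σ s ρ.1

/-- Probability of hitting `T` for the first time in exactly `r` steps, in `M'`. -/
noncomputable def hitLenProb' (M : MDP S A) (σ : Strat S A) (s : S) (T : Set S) (r : ℕ) :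
    ℝ≥0∞ :=
  ∑' ρ : {ρ : FPath S A // M.IsPathR' T ρ ∧ HitsFirst T ρ ∧ ρ.start = s ∧ ρ.length = r},
    M.cylProbR' T σ s ρ.1

/-- Conditional expected length to target `E_{σ,s}(len_T | ◊T)`. -/
noncomputable def condExpLen (M : MDP S A) (σ : Strat S A) (s : S) (T : Set S) : ℝ≥0∞ :=
  ∑' r : ℕ, (r : ℝ≥0∞) * M.hitLenProb σ s T r / M.prReach σ s T

/-- Expected length to target in `M'`, `E'_{σ,s}(len_T)`; `∞` unless `Pr'_{σ,s}(◊T) = 1`. -/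
noncomputable def expLen' (M : MDP S A) (σ : Strat S A) (s : S) (T : Set S) : ℝ≥0∞ :=
  if M.prReach' σ s T = 1 then ∑' r : ℕ, (r : ℝ≥0∞) * M.hitLenProb' σ s T r else ⊤

/-! ### Safety -/

/-- `Safe_n(σ,s)`: probability of the paths of length `n` from `s` avoiding `Bad`. -/
noncomputable def safeN (M : MDP S A) (σ : Strat S A) (s : S) (Bad : Set S) (n : ℕ) : ℝ≥0∞ :=
  ∑' ρ : {ρ : FPath S A //
      M.IsPath ρ ∧ ρ.start = s ∧ ρ.length = n ∧ ∀ x ∈ ρ.states, x ∉ Bad},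
    M.cylProb σ s ρ.1

/-- `Pr_{σ,s}(□¬Bad) := ⨅ n, Safe_n(σ,s)`. -/
noncomputable def prSafe (M : MDP S A) (σ : Strat S A) (s : S) (Bad : Set S) : ℝ≥0∞ :=
  ⨅ n : ℕ, M.safeN σ s Bad n

/-- `Val(s)` for safety: supremum over strategies of `Pr_{σ,s}(□¬Bad)`. -/
noncomputable def safeVal (M : MDP S A) (Bad : Set S) (s : S) : ℝ≥0∞ :=
  ⨆ (σ : Strat S A) (_ : M.IsStrategy σ), M.prSafe σ s Bad

/-- `(s,a) ∈ Opt` for safety. -/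
def OptS (M : MDP S A) (Bad : Set S) (s : S) (a : A) : Prop :=
  M.legal s a ∧ M.safeVal Bad s = ∑ s', M.prob s a s' * M.safeVal Bad s'

/-- `σ ∈ Σ^Opt` for safety. -/
def SigmaOptS (M : MDP S A) (Bad : Set S) (σ : Strat S A) : Prop :=
  ∀ s steps, M.IsPathFrom s steps → ∀ a, 0 < σ s steps a → M.OptS Bad (lastState s steps) a

/-- `UPreⁱ(Bad)`. -/
def UPre (M : MDP S A) (Bad : Set S) : ℕ → Set S
  | 0 => Bad
  | i + 1 => {s | ∀ a, M.legal s a → ∃ s' ∈ M.UPre Bad i, 0 < M.prob s a s'}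

/-- `Good := S \ UPre*(Bad)`. -/
def GoodSet (M : MDP S A) (Bad : Set S) : Set S := (⋃ i, M.UPre Bad i)ᶜ

/-- `V := S \ (Good ∪ Bad)`. -/
def VSet (M : MDP S A) (Bad : Set S) : Set S := (M.GoodSet Bad ∪ Bad)ᶜ

/-- `Pr_{σ,s}(GoodCyl(ρ)) := P_{σ,s}(ρ) · Pr_{σ_ρ, last(ρ)}(□¬Bad)`. -/
noncomputable def goodCyl (M : MDP S A) (σ : Strat S A) (s : S) (Bad : Set S) (ρ : FPath S A) :
    ℝ≥0∞ :=
  M.cylProb σ s ρ * M.prSafe (shiftStrat σ ρ.start ρ.steps) ρ.last Bad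

/-- Transition probabilities of the pruned MDP `M'` for safety. -/
noncomputable def probS' (M : MDP S A) (Bad : Set S) (s : S) (a : A) (s' : S) : ℝ≥0∞ :=
  if M.OptS Bad s a ∧ 0 < M.safeVal Bad s then
    M.prob s a s' * M.safeVal Bad s' / M.safeVal Bad s
  else 0

/-- `ρ` is a finite path of the pruned MDP `M'` (safety version). -/
def IsPathS' (M : MDP S A) (Bad : Set S) (ρ : FPath S A) : Prop :=
  M.IsPathFromPruned (M.safeVal Bad) (M.OptS Bad) ρ.start ρ.steps

/-- Cylinder probability `P'_{σ,s}(ρ)` in the pruned MDP `M'` (safety version). -/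
noncomputable def cylProbS' (M : MDP S A) (Bad : Set S) (σ : Strat S A) (s : S)
    (ρ : FPath S A) : ℝ≥0∞ :=
  cylProbP (M.probS' Bad) σ s ρ

end MDP

/-- `Reward_n(ρ) = ∑_{i<n} R(sᵢ, aᵢ)` for `ρ` starting at `s` with steps `steps`. -/
def rewardOf (R : S → A → ℝ) : S → List (A × S) → ℝ
  | _, [] => 0
  | s, (a, s') :: rest => R s a + rewardOf R s' rest

namespace MDP

variable [Fintype S] [Fintype A]

/-- `E'_{σ,s}(Reward_n)` in the pruned MDP `M'` (safety version). -/
noncomputable def expRewN' (M : MDP S A) (Bad : Set S) (R : S → A → ℝ) (σ : Strat S A)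
    (s : S) (n : ℕ) : ℝ :=
  ∑' ρ : {ρ : FPath S A // M.IsPathS' Bad ρ ∧ ρ.start = s ∧ ρ.length = n},
    (M.cylProbS' Bad σ s ρ.1).toReal * rewardOf R ρ.1.start ρ.1.steps

/-- `E'_{σ,s}(MP) := liminf_n (1/n)·E'_{σ,s}(Reward_n)`. -/
noncomputable def mp' (M : MDP S A) (Bad : Set S) (R : S → A → ℝ) (σ : Strat S A) (s : S) :
    ℝ :=
  Filter.atTop.liminf fun n : ℕ => M.expRewN' Bad R σ s n / n

/-- `E_{σ,s}(Reward_n | □¬Bad)`. -/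
noncomputable def condExpRewN (M : MDP S A) (Bad : Set S) (R : S → A → ℝ) (σ : Strat S A)
    (s : S) (n : ℕ) : ℝ :=
  (∑' ρ : {ρ : FPath S A // M.IsPath ρ ∧ ρ.start = s ∧ ρ.length = n},
    (M.goodCyl σ s Bad ρ.1).toReal * rewardOf R ρ.1.start ρ.1.steps) /
  (M.prSafe σ s Bad).toReal

/-- `E_{σ,s}(MP | □¬Bad) := liminf_n (1/n)·E_{σ,s}(Reward_n | □¬Bad)`. -/
noncomputable def condMP (M : MDP S A) (Bad : Set S) (R : S → A → ℝ) (σ : Strat S A)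
    (s : S) : ℝ :=
  Filter.atTop.liminf fun n : ℕ => M.condExpRewN Bad R σ s n / n

end MDP


/-!
Along a path of the pruned MDP the factors `Val(s')/Val(s)` telescope, so
`P'_{σ,s₀}(ρ) · Val(s₀) = P_{σ,s₀}(ρ) · Val(last ρ)`. It remains to see that a strategy from
`Σ^Opt`, shifted by a path, is optimal from the last state of that path: it is at most optimal
because it agrees with a genuine strategy on all paths from that state, and by induction on `n`
the Bellman equations of the actions it plays give `Val(s) ≤ Safe_n(σ, s)`.
-/

theorem lastState_append (s : S) (l₁ l₂ : List (A × S)) :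
    lastState s (l₁ ++ l₂) = lastState (lastState s l₁) l₂ := by
  induction l₁ generalizing s with
  | nil => rfl
  | cons x l ih => exact ih x.2

@[simp]
theorem wtP_nil (p : S → A → S → ℝ≥0∞) (σ : Strat S A) (s₀ : S) (pre : List (A × S)) :
    wtP p σ s₀ pre [] = 1 := by
  rw [wtP]

theorem wtP_shiftStrat (p : S → A → S → ℝ≥0∞) (σ : Strat S A) (s₀ : S)
    (pre pre' steps : List (A × S)) :
    wtP p (shiftStrat σ s₀ pre) (lastState s₀ pre) pre' steps = wtP p σ s₀ (pre ++ pre') steps := by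
  induction steps generalizing pre' with
  | nil => simp
  | cons x l ih =>
    obtain ⟨a, s'⟩ := x
    rw [wtP, wtP, ih, ← lastState_append, List.append_assoc]
    rfl

theorem wtP_nil_cons (p : S → A → S → ℝ≥0∞) (τ : Strat S A) (s : S) (a : A) (s' : S)
    (l : List (A × S)) :
    wtP p τ s [] ((a, s') :: l) =
      τ s [] a * p s a s' * wtP p (shiftStrat τ s [(a, s')]) s' [] l := by
  have h := wtP_shiftStrat p τ s [(a, s')] [] l
  rw [List.append_nil] at h
  rw [wtP, List.nil_append, ← h]
  rfl

namespace MDP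

variable [Fintype S] [Fintype A] (M : MDP S A) (Bad : Set S)

theorem legal_of_prob_pos {s : S} {a : A} {s' : S} (h : 0 < M.prob s a s') : M.legal s a := by
  unfold prob at h
  unfold legal
  cases hP : M.P s a <;> simp_all

theorem IsPathFrom.append {M : MDP S A} {s : S} {l₁ l₂ : List (A × S)}
    (h₁ : M.IsPathFrom s l₁) (h₂ : M.IsPathFrom (lastState s l₁) l₂) :
    M.IsPathFrom s (l₁ ++ l₂) := by
  induction l₁ generalizing s with
  | nil => exact h₂
  | cons x l ih => exact ⟨h₁.1, h₁.2.1, ih h₁.2.2 h₂⟩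

theorem IsPathFromPruned.isPathFrom {M : MDP S A} {v : S → ℝ≥0∞} {opt : S → A → Prop}
    (hopt : ∀ s a, opt s a → M.legal s a) {s : S} {l : List (A × S)}
    (h : M.IsPathFromPruned v opt s l) : M.IsPathFrom s l := by
  induction l generalizing s with
  | nil => trivial
  | cons x l ih => exact ⟨hopt _ _ h.2.1, h.2.2.1, ih h.2.2.2⟩

def IsSafePathFrom (s : S) (n : ℕ) (l : List (A × S)) : Prop :=
  M.IsPathFrom s l ∧ l.length = n ∧ ∀ x ∈ s :: l.map Prod.snd, x ∉ Bad

theorem isSafePathFrom_zero {s : S} {l : List (A × S)} :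
    M.IsSafePathFrom Bad s 0 l ↔ l = [] ∧ s ∉ Bad := by
  constructor
  · rintro ⟨-, hl, hbad⟩
    obtain rfl := List.length_eq_zero_iff.1 hl
    exact ⟨rfl, hbad s List.mem_cons_self⟩
  · rintro ⟨rfl, hs⟩
    exact ⟨trivial, rfl, by simpa using hs⟩

theorem not_isSafePathFrom_succ_nil {s : S} {n : ℕ} : ¬ M.IsSafePathFrom Bad s (n + 1) [] :=
  fun h => by simpa using h.2.1

theorem isSafePathFrom_succ_cons {s : S} {n : ℕ} {a : A} {s' : S} {l : List (A × S)} :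
    M.IsSafePathFrom Bad s (n + 1) ((a, s') :: l) ↔
      s ∉ Bad ∧ 0 < M.prob s a s' ∧ M.IsSafePathFrom Bad s' n l := by
  simp only [IsSafePathFrom, IsPathFrom, List.length_cons, List.map_cons, List.mem_cons,
    forall_eq_or_imp, Nat.add_right_cancel_iff]
  constructor
  · rintro ⟨⟨-, hp, hl⟩, hn, hs, hs', hbad⟩
    exact ⟨hs, hp, hl, hn, hs', hbad⟩
  · rintro ⟨hs, hp, hl, hn, hs', hbad⟩
    exact ⟨⟨M.legal_of_prob_pos hp, hp, hl⟩, hn, hs, hs', hbad⟩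

theorem safeN_eq_tsum (τ : Strat S A) (s : S) (n : ℕ) :
    M.safeN τ s Bad n =
      ∑' l : List (A × S), if M.IsSafePathFrom Bad s n l then wtP M.prob τ s [] l else 0 := by
  have hinj : Function.Injective (FPath.mk s : List (A × S) → FPath S A) :=
    fun _ _ h => (FPath.mk.inj h).2
  unfold safeN
  refine (tsum_subtype {ρ : FPath S A | M.IsPath ρ ∧ ρ.start = s ∧ ρ.length = n ∧
    ∀ x ∈ ρ.states, x ∉ Bad} (M.cylProb τ s)).trans ?_
  rw [← hinj.tsum_eq]
  · refine tsum_congr fun l => ?_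
    simp [Set.indicator, IsSafePathFrom, IsPath, FPath.states, FPath.length, cylProb, cylProbP]
  · rintro ⟨t, l⟩ hρ
    obtain rfl : t = s := (Set.indicator_apply_ne_zero.1 hρ).1.2.1
    exact ⟨l, rfl⟩

theorem safeN_zero (τ : Strat S A) (s : S) : M.safeN τ s Bad 0 = if s ∈ Bad then 0 else 1 := by
  rw [safeN_eq_tsum, tsum_eq_single []]
  · by_cases hs : s ∈ Bad <;> simp [isSafePathFrom_zero, hs]
  · intro l hl
    simp [isSafePathFrom_zero, hl]

theorem safeN_succ (τ : Strat S A) (s : S) (n : ℕ) :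
    M.safeN τ s Bad (n + 1) = if s ∈ Bad then 0 else
      ∑ a, ∑ s', τ s [] a * M.prob s a s' * M.safeN (shiftStrat τ s [(a, s')]) s' Bad n := by
  have hinj : Function.Injective fun x : (A × S) × List (A × S) => x.1 :: x.2 :=
    fun x y h => Prod.ext (List.cons.inj h).1 (List.cons.inj h).2
  rw [safeN_eq_tsum, ← hinj.tsum_eq, ENNReal.tsum_prod', tsum_fintype, Fintype.sum_prod_type]
  · split_ifs with hs
    · simp [isSafePathFrom_succ_cons, hs]
    refine Finset.sum_congr rfl fun a _ => Finset.sum_congr rfl fun s' _ => ?_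
    by_cases hp : M.prob s a s' = 0
    · simp [isSafePathFrom_succ_cons, hp]
    · simp only [isSafePathFrom_succ_cons, hs, pos_iff_ne_zero.2 hp, not_false_eq_true, true_and,
        wtP_nil_cons, safeN_eq_tsum, ← ENNReal.tsum_mul_left, mul_ite, mul_zero]
  · rintro (_ | ⟨x, l⟩) hl
    · simp [M.not_isSafePathFrom_succ_nil Bad] at hl
    · exact ⟨(x, l), rfl⟩

theorem wtP_congr {τ₁ τ₂ : Strat S A} {s : S} (p : S → A → S → ℝ≥0∞)
    (h : ∀ l, M.IsPathFrom s l → τ₁ s l = τ₂ s l) {l : List (A × S)} (hl : M.IsPathFrom s l) :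
    wtP p τ₁ s [] l = wtP p τ₂ s [] l := by
  induction l generalizing s τ₁ τ₂ with
  | nil => simp
  | cons x l ih =>
    obtain ⟨a, s'⟩ := x
    rw [wtP_nil_cons, wtP_nil_cons, h [] trivial,
      ih (τ₁ := shiftStrat τ₁ s [(a, s')]) (τ₂ := shiftStrat τ₂ s [(a, s')])
        (fun l' hl' => h ((a, s') :: l') ⟨hl.1, hl.2.1, hl'⟩) hl.2.2]

theorem safeN_congr {τ₁ τ₂ : Strat S A} {s : S} (h : ∀ l, M.IsPathFrom s l → τ₁ s l = τ₂ s l)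
    (n : ℕ) : M.safeN τ₁ s Bad n = M.safeN τ₂ s Bad n := by
  simp only [safeN_eq_tsum]
  refine tsum_congr fun l => ?_
  split_ifs with hl
  exacts [M.wtP_congr _ h hl.1, rfl]

theorem safeVal_le_ite (s : S) : M.safeVal Bad s ≤ if s ∈ Bad then 0 else 1 :=
  iSup₂_le fun τ _ => (iInf_le _ 0).trans_eq (M.safeN_zero Bad τ s)

theorem safeVal_ne_top (s : S) : M.safeVal Bad s ≠ ⊤ :=
  ((M.safeVal_le_ite Bad s).trans (by split_ifs <;> simp)).trans_lt ENNReal.one_lt_top |>.ne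

def IsStrategyFrom (τ : Strat S A) (s : S) : Prop :=
  ∀ l, M.IsPathFrom s l → (∑ a, τ s l a) = 1 ∧ ∀ a, 0 < τ s l a → M.legal (lastState s l) a

def IsOptFrom (τ : Strat S A) (s : S) : Prop :=
  ∀ l, M.IsPathFrom s l → ∀ a, 0 < τ s l a → M.OptS Bad (lastState s l) a

variable {M Bad}

theorem IsStrategy.isStrategyFrom {σ : Strat S A} (hσ : M.IsStrategy σ) (s : S) :
    M.IsStrategyFrom σ s :=
  hσ s

theorem SigmaOptS.isOptFrom {σ : Strat S A} (hσ : M.SigmaOptS Bad σ) (s : S) :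
    M.IsOptFrom Bad σ s :=
  hσ s

theorem IsStrategyFrom.shiftStrat {τ : Strat S A} {s : S} (hτ : M.IsStrategyFrom τ s)
    {l : List (A × S)} (hl : M.IsPathFrom s l) :
    M.IsStrategyFrom (shiftStrat τ s l) (lastState s l) := fun l' hl' => by
  have h := hτ (l ++ l') (hl.append hl')
  rwa [lastState_append] at h

theorem IsOptFrom.shiftStrat {τ : Strat S A} {s : S} (hτ : M.IsOptFrom Bad τ s)
    {l : List (A × S)} (hl : M.IsPathFrom s l) :
    M.IsOptFrom Bad (shiftStrat τ s l) (lastState s l) := fun l' hl' => by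
  have h := hτ (l ++ l') (hl.append hl')
  rwa [lastState_append] at h

theorem IsStrategyFrom.exists_isStrategy_eqOn {τ : Strat S A} {s : S}
    (hτ : M.IsStrategyFrom τ s) :
    ∃ τ' : Strat S A, M.IsStrategy τ' ∧ ∀ l, M.IsPathFrom s l → τ' s l = τ s l := by
  let fallback (t : S) : A := (M.exists_legal t).choose
  refine ⟨fun t l => if t = s ∧ M.IsPathFrom t l then τ t l
    else Pi.single (fallback (lastState t l)) 1, fun t l hl => ?_, fun l hl => if_pos ⟨rfl, hl⟩⟩
  by_cases hc : t = s ∧ M.IsPathFrom t l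
  · obtain ⟨rfl, -⟩ := hc
    simpa [hl] using hτ l hl
  · simp only [hc, if_false, Finset.sum_pi_single', Finset.mem_univ, if_true, true_and]
    intro a ha
    obtain rfl : a = fallback (lastState t l) := by
      by_contra hne
      simp [hne] at ha
    exact (M.exists_legal _).choose_spec

theorem prSafe_le_safeVal {τ : Strat S A} {s : S} (hτ : M.IsStrategyFrom τ s) :
    M.prSafe τ s Bad ≤ M.safeVal Bad s := by
  obtain ⟨τ', hτ', heq⟩ := hτ.exists_isStrategy_eqOn
  calc M.prSafe τ s Bad = M.prSafe τ' s Bad :=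
        iInf_congr fun n => M.safeN_congr Bad (fun l hl => (heq l hl).symm) n
    _ ≤ M.safeVal Bad s := le_iSup₂ (f := fun τ _ => M.prSafe τ s Bad) τ' hτ'

theorem safeVal_le_safeN (n : ℕ) {τ : Strat S A} {s : S} (hτ : M.IsStrategyFrom τ s)
    (hopt : M.IsOptFrom Bad τ s) : M.safeVal Bad s ≤ M.safeN τ s Bad n := by
  induction n generalizing τ s with
  | zero => exact (M.safeVal_le_ite Bad s).trans_eq (M.safeN_zero Bad τ s).symm
  | succ n ih =>
    rw [safeN_succ]
    split_ifs with hs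
    · simpa [hs] using M.safeVal_le_ite Bad s
    have hOpt (a : A) (ha : τ s [] a ≠ 0) : M.OptS Bad s a :=
      hopt [] trivial a (pos_iff_ne_zero.2 ha)
    calc M.safeVal Bad s = ∑ a, τ s [] a * M.safeVal Bad s := by
          rw [← Finset.sum_mul, (hτ [] trivial).1, one_mul]
      _ = ∑ a, ∑ s', τ s [] a * M.prob s a s' * M.safeVal Bad s' := by
          refine Finset.sum_congr rfl fun a _ => ?_
          by_cases ha : τ s [] a = 0
          · simp [ha]
          · simp only [(hOpt a ha).2, Finset.mul_sum, mul_assoc]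
      _ ≤ _ := by
          refine Finset.sum_le_sum fun a _ => Finset.sum_le_sum fun s' _ => ?_
          by_cases hp : τ s [] a * M.prob s a s' = 0
          · simp [hp]
          obtain ⟨ha, hp⟩ := mul_ne_zero_iff.1 hp
          have hstep : M.IsPathFrom s [(a, s')] := ⟨(hOpt a ha).1, pos_iff_ne_zero.2 hp, trivial⟩
          gcongr
          exact ih (hτ.shiftStrat hstep) (hopt.shiftStrat hstep)

theorem prSafe_eq_safeVal {τ : Strat S A} {s : S} (hτ : M.IsStrategyFrom τ s)
    (hopt : M.IsOptFrom Bad τ s) : M.prSafe τ s Bad = M.safeVal Bad s :=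
  (prSafe_le_safeVal hτ).antisymm (le_iInf fun n => safeVal_le_safeN n hτ hopt)

theorem probS'_mul_safeVal {s : S} {a : A} (s' : S) (hopt : M.OptS Bad s a)
    (hs : 0 < M.safeVal Bad s) :
    M.probS' Bad s a s' * M.safeVal Bad s = M.prob s a s' * M.safeVal Bad s' := by
  rw [probS', if_pos ⟨hopt, hs⟩, ENNReal.div_mul_cancel hs.ne' (M.safeVal_ne_top Bad s)]

theorem wtP_probS'_mul_safeVal (τ : Strat S A) {s : S} {l : List (A × S)}
    (hl : M.IsPathFromPruned (M.safeVal Bad) (M.OptS Bad) s l) :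
    wtP (M.probS' Bad) τ s [] l * M.safeVal Bad s =
      wtP M.prob τ s [] l * M.safeVal Bad (lastState s l) := by
  induction l generalizing s τ with
  | nil => simp [lastState]
  | cons x l ih =>
    obtain ⟨a, s'⟩ := x
    obtain ⟨hs, hopt, -, hl⟩ := hl
    calc wtP (M.probS' Bad) τ s [] ((a, s') :: l) * M.safeVal Bad s
        = τ s [] a * (M.probS' Bad s a s' * M.safeVal Bad s) *
            wtP (M.probS' Bad) (shiftStrat τ s [(a, s')]) s' [] l := by
          rw [wtP_nil_cons]; ring
      _ = τ s [] a * M.prob s a s' *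
            (wtP (M.probS' Bad) (shiftStrat τ s [(a, s')]) s' [] l * M.safeVal Bad s') := by
          rw [probS'_mul_safeVal s' hopt hs]; ring
      _ = _ := by rw [ih _ hl, wtP_nil_cons, lastState]; ring

end MDP

theorem stmt17_general {S : Type u} {A : Type v} [Fintype S] [Fintype A]
    (M : MDP S A) (Bad : Set S)
    (σ : Strat S A) (hσ : M.IsStrategy σ) (hopt : M.SigmaOptS Bad σ)
    (s₀ : S) (hs₀ : 0 < M.safeVal Bad s₀)
    (ρ : FPath S A) (hstart : ρ.start = s₀) (hρ : M.IsPathS' Bad ρ) :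
    M.cylProbS' Bad σ s₀ ρ = M.goodCyl σ s₀ Bad ρ / M.safeVal Bad s₀ := by
  obtain ⟨s, l⟩ := ρ
  obtain rfl : s = s₀ := hstart
  have hl : M.IsPathFrom s l := MDP.IsPathFromPruned.isPathFrom (fun _ _ h => h.1) hρ
  have hlast : M.prSafe (shiftStrat σ s l) (lastState s l) Bad = M.safeVal Bad (lastState s l) :=
    MDP.prSafe_eq_safeVal ((hσ.isStrategyFrom s).shiftStrat hl) ((hopt.isOptFrom s).shiftStrat hl)
  rw [ENNReal.eq_div_iff hs₀.ne' (M.safeVal_ne_top Bad s), mul_comm]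
  simpa [MDP.cylProbS', MDP.goodCyl, MDP.cylProb, cylProbP, FPath.last, hlast] using
    MDP.wtP_probS'_mul_safeVal σ hρ

/-- for `σ ∈ Σ^Opt`, `s₀ ∈ S'`, and every finite path `ρ` of `M'` starting
at `s₀`, `P'_{σ,s₀}(ρ) = Pr_{σ,s₀}(GoodCyl(ρ))/Val(s₀)`. -/
theorem stmt17 {S : Type u} {A : Type v} [Fintype S] [Fintype A] [Nonempty S] [Nonempty A]
    (M : MDP S A) (Bad : Set S) (hBad : M.SinkSet Bad)
    (σ : Strat S A) (hσ : M.IsStrategy σ) (hopt : M.SigmaOptS Bad σ)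
    (s₀ : S) (hs₀ : 0 < M.safeVal Bad s₀)
    (ρ : FPath S A) (hstart : ρ.start = s₀) (hρ : M.IsPathS' Bad ρ) :
    M.cylProbS' Bad σ s₀ ρ = M.goodCyl σ s₀ Bad ρ / M.safeVal Bad s₀ :=
  stmt17_general M Bad σ hσ hopt s₀ hs₀ ρ hstart hρ
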